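/- Let r ≥ 1 and let ω_1, …, ω_r be complex numbers with Re(ω_j) > 0 for all j. Then for every complex number s with Re(s) > 1, the family (ζ(s + n_1ω_1 + ⋯ + n_rω_r))_{(n_1,…,n_r) ∈ ℕ^r} is multipliable, its product Z(s,ω) is nonzero, and the function s ↦ Z(s,ω) is holomorphic on the half-plane {s : Re(s) > 1}. -/

import Mathlib

open Complex Filter Topology

/-!
For `σ ≤ Re w` with `σ > 1`, `‖ζ(w) - 1‖ ≤ ∑_{m ≥ 2} m^{-Re w} ≤ C_σ · 2^{σ - Re w}`. Along the
lattice `s + ∑ nⱼωⱼ` with `Re s ≥ σ` this is at most `C_σ ∏ⱼ (2^{-Re ωⱼ})^{nⱼ}`, a product of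
convergent geometric series, so `∏ (1 + (ζ - 1))` converges absolutely and locally uniformly on
`Re s > σ`; its limit is therefore nonzero and holomorphic there.
-/

lemma summable_pi_prod_of_nonneg {ι β : Type*} [Fintype ι] {f : ι → β → ℝ}
    (hf₀ : ∀ i b, 0 ≤ f i b) (hf : ∀ i, Summable (f i)) :
    Summable fun x : ι → β => ∏ i, f i (x i) := by
  classical
  have hprod₀ : ∀ x : ι → β, 0 ≤ ∏ i, f i (x i) := fun x => Finset.prod_nonneg fun i _ => hf₀ i _
  refine summable_of_sum_le (c := ∏ i, ∑' b, f i b) hprod₀ fun u => ?_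
  calc ∑ x ∈ u, ∏ i, f i (x i)
      ≤ ∑ x ∈ Fintype.piFinset fun i => u.image (· i), ∏ i, f i (x i) :=
        Finset.sum_le_sum_of_subset_of_nonneg
          (fun x hx => Fintype.mem_piFinset.2 fun i => Finset.mem_image_of_mem _ hx)
          (fun x _ _ => hprod₀ x)
    _ = ∏ i, ∑ b ∈ u.image (· i), f i b := (Finset.prod_univ_sum _ _).symm
    _ ≤ ∏ i, ∑' b, f i b :=
        Finset.prod_le_prod (fun i _ => Finset.sum_nonneg fun b _ => hf₀ i b)
          fun i _ => (hf i).sum_le_tsum _ fun b _ => hf₀ i b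

lemma riemannZeta_sub_one_eq_tsum {w : ℂ} (hw : 1 < w.re) :
    riemannZeta w - 1 = ∑' n : ℕ, 1 / ((n : ℂ) + 2) ^ w := by
  have hsum : Summable fun n : ℕ => 1 / ((n : ℂ) + 1) ^ w :=
    ((summable_nat_add_iff 1).2 (Complex.summable_one_div_nat_cpow.2 hw)).congr fun n => by
      push_cast; rfl
  rw [zeta_eq_tsum_one_div_nat_add_one_cpow hw, hsum.tsum_eq_zero_add]
  simp only [Nat.cast_zero, zero_add, one_cpow, div_one, Nat.cast_succ, add_sub_cancel_left,
    add_assoc, one_add_one_eq_two]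

lemma norm_one_div_nat_add_two_cpow_le {σ : ℝ} {w : ℂ} (hw : σ ≤ w.re) (n : ℕ) :
    ‖1 / ((n : ℂ) + 2) ^ w‖ ≤ ((n : ℝ) + 2) ^ (-σ) * 2 ^ (σ - w.re) := by
  have hpos : (0 : ℝ) < n + 2 := by positivity
  have hcast : ((n : ℂ) + 2) = (((n : ℝ) + 2 : ℝ) : ℂ) := by push_cast; rfl
  calc ‖1 / ((n : ℂ) + 2) ^ w‖ = ((n : ℝ) + 2) ^ (-σ) * ((n : ℝ) + 2) ^ (σ - w.re) := by
        rw [norm_div, norm_one, hcast, norm_cpow_eq_rpow_re_of_pos hpos, ← Real.rpow_add hpos,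
          one_div, ← Real.rpow_neg hpos.le]
        ring_nf
    _ ≤ ((n : ℝ) + 2) ^ (-σ) * 2 ^ (σ - w.re) :=
        mul_le_mul_of_nonneg_left (Real.rpow_le_rpow_of_nonpos two_pos (by simp) (by linarith))
          (Real.rpow_nonneg hpos.le _)

lemma norm_riemannZeta_sub_one_le {σ : ℝ} (hσ : 1 < σ) {w : ℂ} (hw : σ ≤ w.re) :
    ‖riemannZeta w - 1‖ ≤ (∑' n : ℕ, ((n : ℝ) + 2) ^ (-σ)) * 2 ^ (σ - w.re) := by
  have hσsum : Summable fun n : ℕ => ((n : ℝ) + 2) ^ (-σ) :=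
    ((summable_nat_add_iff 2).2 (Real.summable_nat_rpow.2 (by linarith : -σ < -1))).congr
      fun n => by push_cast; rfl
  rw [riemannZeta_sub_one_eq_tsum (hσ.trans_le hw), ← tsum_mul_right]
  exact tsum_of_norm_bounded (hσsum.mul_right _).hasSum (norm_one_div_nat_add_two_cpow_le hw)

section Lattice

variable {ι : Type*} [Fintype ι] {ω : ι → ℂ}

lemma re_add_sum_natCast_mul (s : ℂ) (n : ι → ℕ) :
    (s + ∑ j, (n j : ℂ) * ω j).re = s.re + ∑ j, (n j : ℝ) * (ω j).re := by
  simp [Complex.re_sum]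

lemma re_le_re_add_sum_natCast_mul (hω : ∀ j, 0 ≤ (ω j).re) (s : ℂ) (n : ι → ℕ) :
    s.re ≤ (s + ∑ j, (n j : ℂ) * ω j).re := by
  rw [re_add_sum_natCast_mul]
  exact le_add_of_nonneg_right (Finset.sum_nonneg fun j _ => mul_nonneg (n j).cast_nonneg (hω j))

lemma norm_riemannZeta_lattice_sub_one_le (hω : ∀ j, 0 ≤ (ω j).re) {σ : ℝ} (hσ : 1 < σ)
    {s : ℂ} (hs : σ ≤ s.re) (n : ι → ℕ) :
    ‖riemannZeta (s + ∑ j, (n j : ℂ) * ω j) - 1‖ ≤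
      (∑' m : ℕ, ((m : ℝ) + 2) ^ (-σ)) * ∏ j, ((2 : ℝ) ^ (-(ω j).re)) ^ n j := by
  refine (norm_riemannZeta_sub_one_le hσ (hs.trans (re_le_re_add_sum_natCast_mul hω s n))).trans
    (mul_le_mul_of_nonneg_left ?_ (tsum_nonneg fun m => Real.rpow_nonneg (by positivity) _))
  calc (2 : ℝ) ^ (σ - (s + ∑ j, (n j : ℂ) * ω j).re) ≤ 2 ^ (∑ j, -(ω j).re * n j) := by
        refine Real.rpow_le_rpow_of_exponent_le one_le_two ?_
        have hsum : ∑ j, -(ω j).re * n j = -∑ j, (n j : ℝ) * (ω j).re := by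
          simp [Finset.sum_neg_distrib, mul_comm]
        rw [re_add_sum_natCast_mul, hsum]
        linarith
    _ = ∏ j, ((2 : ℝ) ^ (-(ω j).re)) ^ n j := by
        rw [Real.rpow_sum_of_pos two_pos]
        simp only [Real.rpow_mul zero_le_two, Real.rpow_natCast]

lemma summable_prod_two_rpow_neg_re_pow (hω : ∀ j, 0 < (ω j).re) :
    Summable fun n : ι → ℕ => ∏ j, ((2 : ℝ) ^ (-(ω j).re)) ^ n j :=
  summable_pi_prod_of_nonneg (fun _ m => pow_nonneg (Real.rpow_nonneg zero_le_two _) m)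
    fun j => summable_geometric_of_lt_one (Real.rpow_nonneg zero_le_two _)
      (Real.rpow_lt_one_of_one_lt_of_neg one_lt_two (neg_neg_of_pos (hω j)))

lemma differentiableOn_riemannZeta_add_sum_natCast_mul (hω : ∀ j, 0 ≤ (ω j).re) (n : ι → ℕ) :
    DifferentiableOn ℂ (fun s => riemannZeta (s + ∑ j, (n j : ℂ) * ω j)) {s | 1 < s.re} := by
  intro s hs
  have hne : s + ∑ j, (n j : ℂ) * ω j ≠ 1 := fun h => by
    have := re_le_re_add_sum_natCast_mul hω s n
    rw [h, one_re] at this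
    exact lt_irrefl _ (hs.trans_le this)
  exact ((differentiableAt_riemannZeta hne).comp s
    (differentiableAt_id.add_const _)).differentiableWithinAt

lemma hasProdLocallyUniformlyOn_riemannZeta_lattice (hω : ∀ j, 0 < (ω j).re) {σ : ℝ}
    (hσ : 1 < σ) :
    HasProdLocallyUniformlyOn (fun (n : ι → ℕ) s => riemannZeta (s + ∑ j, (n j : ℂ) * ω j))
      (fun s => ∏' n : ι → ℕ, riemannZeta (s + ∑ j, (n j : ℂ) * ω j)) {s | σ < s.re} := by
  have h := ((summable_prod_two_rpow_neg_re_pow hω).mul_left _).hasProdLocallyUniformlyOn_one_add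
    (f := fun (n : ι → ℕ) s => riemannZeta (s + ∑ j, (n j : ℂ) * ω j) - 1)
    (isOpen_lt continuous_const continuous_re)
    (.of_forall fun n s hs =>
      norm_riemannZeta_lattice_sub_one_le (fun j => (hω j).le) hσ hs.le n)
    fun n => (((differentiableOn_riemannZeta_add_sum_natCast_mul (fun j => (hω j).le) n).sub_const
      1).continuousOn.mono fun s hs => hσ.trans hs)
  simpa only [add_sub_cancel] using h

lemma tprod_riemannZeta_lattice_ne_zero (hω : ∀ j, 0 < (ω j).re) {s : ℂ} (hs : 1 < s.re) :
    ∏' n : ι → ℕ, riemannZeta (s + ∑ j, (n j : ℂ) * ω j) ≠ 0 := by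
  have h := tprod_one_add_ne_zero_of_summable
    (f := fun n : ι → ℕ => riemannZeta (s + ∑ j, (n j : ℂ) * ω j) - 1)
    (fun n => by
      simpa using riemannZeta_ne_zero_of_one_lt_re
        (hs.trans_le (re_le_re_add_sum_natCast_mul (fun j => (hω j).le) s n)))
    (Summable.of_nonneg_of_le (fun _ => norm_nonneg _)
      (norm_riemannZeta_lattice_sub_one_le (fun j => (hω j).le) hs le_rfl)
      ((summable_prod_two_rpow_neg_re_pow hω).mul_left _))
  simpa only [add_sub_cancel] using h

lemma differentiableOn_tprod_riemannZeta_lattice (hω : ∀ j, 0 < (ω j).re) {σ : ℝ}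
    (hσ : 1 < σ) :
    DifferentiableOn ℂ (fun s => ∏' n : ι → ℕ, riemannZeta (s + ∑ j, (n j : ℂ) * ω j))
      {s | σ < s.re} :=
  (hasProdLocallyUniformlyOn_riemannZeta_lattice hω hσ).differentiableOn
    (.of_forall fun _ => DifferentiableOn.fun_finsetProd fun n _ =>
      (differentiableOn_riemannZeta_add_sum_natCast_mul (fun j => (hω j).le) n).mono
        fun _ hs => hσ.trans hs)
    (isOpen_lt continuous_const continuous_re)

end Lattice

theorem higherRiemannZeta_lattice_convergence_general (r : ℕ) (ω : Fin r → ℂ)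
    (hω : ∀ j, 0 < (ω j).re) :
    (∀ s : ℂ, 1 < s.re →
      Multipliable (fun n : Fin r → ℕ => riemannZeta (s + ∑ j, (n j : ℂ) * ω j)) ∧
      (∏' n : Fin r → ℕ, riemannZeta (s + ∑ j, (n j : ℂ) * ω j)) ≠ 0) ∧
    DifferentiableOn ℂ
      (fun s : ℂ => ∏' n : Fin r → ℕ, riemannZeta (s + ∑ j, (n j : ℂ) * ω j))
      {s : ℂ | 1 < s.re} := by
  refine ⟨fun s hs => ⟨?_, tprod_riemannZeta_lattice_ne_zero hω hs⟩, fun s hs => ?_⟩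
  · obtain ⟨σ, hσ, hσs⟩ := exists_between hs
    exact ((hasProdLocallyUniformlyOn_riemannZeta_lattice hω hσ).hasProd hσs).multipliable
  · obtain ⟨σ, hσ, hσs⟩ := exists_between (show 1 < s.re from hs)
    exact ((differentiableOn_tprod_riemannZeta_lattice hω hσ).differentiableAt
      ((isOpen_lt continuous_const continuous_re).mem_nhds hσs)).differentiableWithinAt

/-- For `ω₁,…,ω_r` with positive real parts and `Re s > 1`, the family
`(ζ(s + n₁ω₁ + ⋯ + n_rω_r))` over `(n₁,…,n_r) ∈ ℕ^r` is multipliable, its product is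
nonzero, and the resulting function of `s` is holomorphic on `Re s > 1`. -/
theorem higherRiemannZeta_lattice_convergence (r : ℕ) (hr : 1 ≤ r) (ω : Fin r → ℂ)
    (hω : ∀ j, 0 < (ω j).re) :
    (∀ s : ℂ, 1 < s.re →
      Multipliable (fun n : Fin r → ℕ => riemannZeta (s + ∑ j, (n j : ℂ) * ω j)) ∧
      (∏' n : Fin r → ℕ, riemannZeta (s + ∑ j, (n j : ℂ) * ω j)) ≠ 0) ∧
    DifferentiableOn ℂ
      (fun s : ℂ => ∏' n : Fin r → ℕ, riemannZeta (s + ∑ j, (n j : ℂ) * ω j))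
      {s : ℂ | 1 < s.re} :=
  higherRiemannZeta_lattice_convergence_general r ω hω
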